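/- arXiv:1605.05056 — 2 statements merged into one kernel-verified Lean document; each statement's English description precedes it below -/
import Mathlib

section
/- The graph F1 satisfies γ_e(F1) < γ(F1). -/
open SimpleGraph

/-- `D` is a dominating set of `G`. -/
def IsDomSet {V : Type*} (G : SimpleGraph V) (D : Finset V) : Prop :=
  ∀ v : V, v ∉ D → ∃ u ∈ D, G.Adj u v

/-- The domination number of `G`. -/
noncomputable def domNum {V : Type*} (G : SimpleGraph V) [Fintype V] : ℕ :=
  sInf {n | ∃ D : Finset V, IsDomSet G D ∧ D.card = n}

open Classical in
/-- `D` contains exactly one endvertex of a path between `u` and `v`. -/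
def endCond {V : Type*} (D : Finset V) (u v : V) : Prop :=
  if u = v then u ∈ D else ((u ∈ D ∧ v ∉ D) ∨ (u ∉ D ∧ v ∈ D))

/-- `dist_{(G,D)}(u,v)`: the minimum length of a path in `G` between `u` and `v` such
that `D` contains exactly one endvertex and no internal vertex of the path;
`⊤` if no such path exists. -/
noncomputable def eDist {V : Type*} (G : SimpleGraph V) (D : Finset V) (u v : V) : ℕ∞ :=
  ⨅ (p : {p : G.Walk u v // p.IsPath ∧ endCond D u v ∧
      ∀ w ∈ p.support, w ≠ u → w ≠ v → w ∉ D}), (p.1.length : ℕ∞)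

/-- `(1/2)^(d-1)` for `d : ℕ∞`, with `(1/2)^∞ = 0`. -/
noncomputable def halfPow (d : ℕ∞) : ℝ :=
  if d = ⊤ then 0 else 2 * (1 / 2 : ℝ) ^ d.toNat

/-- The weight `w_{(G,D)}(u)`. -/
noncomputable def expWeight {V : Type*} (G : SimpleGraph V) (D : Finset V) (u : V) : ℝ :=
  ∑ v ∈ D, halfPow (eDist G D u v)

/-- `D` is an exponential dominating set of `G`. -/
def IsExpDomSet {V : Type*} (G : SimpleGraph V) (D : Finset V) : Prop :=
  ∀ u : V, 1 ≤ expWeight G D u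

/-- The exponential domination number of `G`. -/
noncomputable def expDomNum {V : Type*} (G : SimpleGraph V) [Fintype V] : ℕ :=
  sInf {n | ∃ D : Finset V, IsExpDomSet G D ∧ D.card = n}

/-- `G` is `H`-free: `G` has no induced subgraph isomorphic to `H`. -/
def Free {V W : Type*} (G : SimpleGraph V) (H : SimpleGraph W) : Prop :=
  ¬ Nonempty (H ↪g G)

/-- The graph on `Fin n` with the given edge list. -/
def graphOfList (n : ℕ) (l : List (Fin n × Fin n)) : SimpleGraph (Fin n) :=
  SimpleGraph.fromRel (fun a b => (a, b) ∈ l)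

/-- The bull `B`. -/
def bull : SimpleGraph (Fin 5) := graphOfList 5 [(0,1),(1,2),(0,2),(0,3),(1,4)]
/-- The diamond `D` (`K₄` minus an edge). -/
def diamond : SimpleGraph (Fin 4) := graphOfList 4 [(0,1),(0,2),(0,3),(1,2),(1,3)]
/-- The complete graph `K₄`. -/
def K4 : SimpleGraph (Fin 4) := ⊤
/-- The complete bipartite graph `K_{2,3}` with parts `{0,1}` and `{2,3,4}`. -/
def K23 : SimpleGraph (Fin 5) := graphOfList 5 [(0,2),(0,3),(0,4),(1,2),(1,3),(1,4)]
/-- The 2×3 grid `P₂ □ P₃`. -/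
def P2P3 : SimpleGraph (Fin 2 × Fin 3) := (pathGraph 2) □ (pathGraph 3)
/-- The path on 7 vertices. -/
def P7 : SimpleGraph (Fin 7) := pathGraph 7
/-- The cycle on 7 vertices. -/
def C7 : SimpleGraph (Fin 7) := cycleGraph 7
/-- `F₁`: the path `0-1-2` with pendant vertices `3,4,5` attached to `0,1,2`. -/
def F1 : SimpleGraph (Fin 6) := graphOfList 6 [(0,1),(1,2),(0,3),(1,4),(2,5)]
/-- `F₂`: a 4-cycle with a pendant path on 3 new vertices. -/
def F2 : SimpleGraph (Fin 7) := graphOfList 7 [(0,1),(1,2),(2,3),(3,0),(0,4),(4,5),(5,6)]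
/-- `F₃`: a 4-cycle `0-1-2-3` and a 5-cycle `1-2-4-5-6` sharing exactly the edge `1-2`. -/
def F3 : SimpleGraph (Fin 7) := graphOfList 7 [(0,1),(1,2),(2,3),(3,0),(2,4),(4,5),(5,6),(6,1)]
/-- `F₄`: two 4-cycles sharing exactly the vertex `0`. -/
def F4 : SimpleGraph (Fin 7) := graphOfList 7 [(0,1),(1,2),(2,3),(3,0),(0,4),(4,5),(5,6),(6,0)]
/-- `F₅`: vertices `u=0, v₁=1, v₂=2, w=3, a=4, b=5, z=6`. -/
def F5 : SimpleGraph (Fin 7) := graphOfList 7 [(0,1),(0,2),(1,3),(2,3),(1,4),(4,5),(5,2),(3,6)]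

/-!
In `F₁` the spine is `0 - 1 - 2` and `i + 3` is the leaf at `i`. The two ends `{0, 2}` of the
spine form an exponential dominating set: `0` and `2` have weight at least `2`, their neighbours
`1, 3, 5` weight at least `1`, and the middle leaf `4` sees both `0` and `2` at distance `2`
through `1`, for a weight of `1/2 + 1/2`. On the other hand a dominating set contains `i` or
its leaf `i + 3` for each `i < 3`, so `v ↦ v % 3` maps it onto three values and `γ(F₁) ≥ 3`.
-/

open Finset

lemma halfPow_nonneg (d : ℕ∞) : 0 ≤ halfPow d := by
  unfold halfPow
  split_ifs <;> positivity

lemma halfPow_natCast (n : ℕ) : halfPow n = 2 * (1 / 2 : ℝ) ^ n := by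
  simp [halfPow]

lemma halfPow_antitone : Antitone halfPow := by
  intro d e hde
  rcases eq_or_ne e ⊤ with rfl | he
  · simpa [halfPow] using halfPow_nonneg d
  lift e to ℕ using he
  lift d to ℕ using ne_top_of_le_ne_top (ENat.natCast_ne_top e) hde
  rw [halfPow_natCast, halfPow_natCast]
  have := pow_le_pow_of_le_one (by norm_num : (0 : ℝ) ≤ 1 / 2) (by norm_num) (Nat.cast_le.mp hde)
  linarith

section ExpWeight

variable {V : Type*} {G : SimpleGraph V} {D : Finset V} {u v v' w : V}

lemma endCond_self (hu : u ∈ D) : endCond D u u := by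
  simpa [endCond] using hu

lemma endCond_of_notMem_of_mem (hu : u ∉ D) (hv : v ∈ D) : endCond D u v := by
  have huv : u ≠ v := fun h => hu (h ▸ hv)
  simp [endCond, huv, hu, hv]

lemma eDist_le_length (p : G.Walk u v) (hp : p.IsPath) (hend : endCond D u v)
    (hint : ∀ w ∈ p.support, w ≠ u → w ≠ v → w ∉ D) : eDist G D u v ≤ p.length :=
  iInf_le (fun q : {q : G.Walk u v // q.IsPath ∧ endCond D u v ∧
    ∀ w ∈ q.support, w ≠ u → w ≠ v → w ∉ D} => (q.1.length : ℕ∞)) ⟨p, hp, hend, hint⟩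

lemma two_mul_half_pow_length_le_halfPow_eDist (p : G.Walk u v) (hp : p.IsPath)
    (hend : endCond D u v) (hint : ∀ w ∈ p.support, w ≠ u → w ≠ v → w ∉ D) :
    2 * (1 / 2 : ℝ) ^ p.length ≤ halfPow (eDist G D u v) :=
  halfPow_natCast p.length ▸ halfPow_antitone (eDist_le_length p hp hend hint)

lemma halfPow_eDist_le_expWeight (hv : v ∈ D) : halfPow (eDist G D u v) ≤ expWeight G D u :=
  single_le_sum (fun _ _ => halfPow_nonneg _) hv

lemma one_le_expWeight_of_mem (hu : u ∈ D) : 1 ≤ expWeight G D u := by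
  have := two_mul_half_pow_length_le_halfPow_eDist (D := D) (Walk.nil : G.Walk u u)
    Walk.IsPath.nil (endCond_self hu) (by simp +contextual)
  norm_num at this
  linarith [halfPow_eDist_le_expWeight (G := G) (u := u) hu]

lemma one_le_expWeight_of_adj (hu : u ∉ D) (hv : v ∈ D) (huv : G.Adj u v) :
    1 ≤ expWeight G D u := by
  have := two_mul_half_pow_length_le_halfPow_eDist (.cons huv .nil) (by simp [huv.ne])
    (endCond_of_notMem_of_mem hu hv) (by simp +contextual)
  norm_num at this
  linarith [halfPow_eDist_le_expWeight (G := G) (u := u) hv]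

lemma half_le_halfPow_eDist_of_adj_of_adj (hu : u ∉ D) (hw : w ∉ D) (hv : v ∈ D)
    (huw : G.Adj u w) (hwv : G.Adj w v) : 1 / 2 ≤ halfPow (eDist G D u v) := by
  have huv : u ≠ v := fun h => hu (h ▸ hv)
  have := two_mul_half_pow_length_le_halfPow_eDist (.cons huw (.cons hwv .nil))
    (by simp [huw.ne, hwv.ne, huv]) (endCond_of_notMem_of_mem hu hv)
    (by simp +contextual [hw])
  norm_num at this
  linarith

lemma one_le_expWeight_of_adj_of_adj_of_adj (hu : u ∉ D) (hw : w ∉ D) (hv : v ∈ D)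
    (hv' : v' ∈ D) (hvv' : v ≠ v') (huw : G.Adj u w) (hwv : G.Adj w v) (hwv' : G.Adj w v') :
    1 ≤ expWeight G D u := by
  classical
  have hsum : halfPow (eDist G D u v) + halfPow (eDist G D u v') ≤ expWeight G D u := by
    rw [← sum_pair (f := fun x => halfPow (eDist G D u x)) hvv']
    exact sum_le_sum_of_subset_of_nonneg (by simp [insert_subset_iff, hv, hv'])
      (fun _ _ _ => halfPow_nonneg _)
  linarith [half_le_halfPow_eDist_of_adj_of_adj hu hw hv huw hwv,
    half_le_halfPow_eDist_of_adj_of_adj hu hw hv' huw hwv']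

lemma expDomNum_le_card [Fintype V] (hD : IsExpDomSet G D) : expDomNum G ≤ #D :=
  Nat.sInf_le ⟨D, hD, rfl⟩

end ExpWeight

section Domination

variable {V : Type*} {G : SimpleGraph V} {D : Finset V}

lemma IsDomSet.mem_or_mem_of_forall_adj_eq {a b : V} (hD : IsDomSet G D)
    (hb : ∀ u, G.Adj u b → u = a) : a ∈ D ∨ b ∈ D := by
  by_cases h : b ∈ D
  · exact .inr h
  · obtain ⟨u, hu, hub⟩ := hD b h
    exact .inl (hb u hub ▸ hu)

lemma le_domNum [Fintype V] {k : ℕ} (h : ∀ D, IsDomSet G D → k ≤ #D) : k ≤ domNum G :=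
  le_csInf ⟨_, univ, fun v hv => absurd (mem_univ v) hv, rfl⟩ (by rintro _ ⟨D, hD, rfl⟩; exact h D hD)

end Domination

instance : DecidableRel F1.Adj := by
  unfold F1 graphOfList
  infer_instance

lemma F1_isExpDomSet : IsExpDomSet F1 {0, 2} := by
  intro u
  fin_cases u
  · exact one_le_expWeight_of_mem (by decide)
  · exact one_le_expWeight_of_adj (v := 0) (by decide) (by decide) (by decide)
  · exact one_le_expWeight_of_mem (by decide)
  · exact one_le_expWeight_of_adj (v := 0) (by decide) (by decide) (by decide)
  · exact one_le_expWeight_of_adj_of_adj_of_adj (w := 1) (v := 0) (v' := 2)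
      (by decide) (by decide) (by decide) (by decide) (by decide) (by decide) (by decide) (by decide)
  · exact one_le_expWeight_of_adj (v := 2) (by decide) (by decide) (by decide)

lemma three_le_card_of_isDomSet_F1 {D : Finset (Fin 6)} (hD : IsDomSet F1 D) : 3 ≤ #D := by
  have hleaf : ∀ i : Fin 6, i < 3 → i ∈ D ∨ i + 3 ∈ D := fun i hi =>
    hD.mem_or_mem_of_forall_adj_eq (by revert i; decide)
  have hmod : ∀ i : Fin 6, (i + 3).val % 3 = i.val % 3 := by decide
  have hsurj : Set.SurjOn (fun v : Fin 6 => v.val % 3) D (range 3) := by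
    intro i hi
    obtain ⟨i, rfl⟩ : ∃ j : Fin 6, j.val = i := ⟨⟨i, by simp at hi; omega⟩, rfl⟩
    rcases hleaf i (by simpa [Fin.lt_def] using hi) with h | h
    · exact ⟨i, h, by simpa using hi⟩
    · exact ⟨i + 3, h, by simpa [hmod i] using hi⟩
  simpa using card_le_card_of_surjOn _ hsurj

/-- `γₑ(F₁) < γ(F₁)`. -/
theorem expDomNum_F1_lt_domNum_F1 : expDomNum F1 < domNum F1 :=
  calc expDomNum F1 ≤ 2 := expDomNum_le_card F1_isExpDomSet
    _ < 3 := by norm_num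
    _ ≤ domNum F1 := le_domNum fun _ => three_le_card_of_isDomSet_F1
end

section
/- Let G be a finite connected simple graph that is {B, D, K4, K_{2,3}, P2□P3, P7, C7, F1, F2, F3, F4, F5}-free and has γ(G) ≥ 3. Then every triangle of G contains at least one vertex whose degree in G is exactly 2. -/
open SimpleGraph

/-!
Let `x₀x₁x₂` be a triangle none of whose vertices has degree `2`. Diamond- and `K₄`-freeness say
that adjacent vertices have at most one common neighbour, so every `xᵢ` has a neighbour `yᵢ`
adjacent to no other `xⱼ` (a third neighbour of `xᵢ` will do). Bull-freeness forces any two such private neighbours of distinct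
triangle vertices to be adjacent; together with the first fact this makes `yᵢ` unique and shows
that the prism on `{x₀, x₁, x₂, y₀, y₁, y₂}` has no further neighbours. By connectedness it is the
whole graph, and `{x₀, y₁}` dominates it.
-/

theorem domNum_le_card {V : Type*} {G : SimpleGraph V} [Fintype V] {D : Finset V}
    (hD : IsDomSet G D) : domNum G ≤ D.card :=
  Nat.sInf_le ⟨D, hD, rfl⟩

theorem Fin.exists_ne_ne_three (i j : Fin 3) : ∃ k, k ≠ i ∧ k ≠ j := by
  revert i j; decide

namespace SimpleGraph

variable {V : Type*} {G : SimpleGraph V}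

theorem not_free_of_injective_of_adj_iff {W : Type*} {H : SimpleGraph W} (f : W → V)
    (hf : Function.Injective f) (hadj : ∀ i j, G.Adj (f i) (f j) ↔ H.Adj i j) :
    ¬ _root_.Free G H :=
  fun hfree => hfree ⟨⟨⟨f, hf⟩, hadj _ _⟩⟩

theorem subsingleton_commonNeighbors (hD : _root_.Free G diamond) (hK4 : _root_.Free G K4)
    {a b : V} (hab : G.Adj a b) : (G.commonNeighbors a b).Subsingleton := by
  rintro c ⟨hac, hbc⟩ d ⟨had, hbd⟩
  by_contra hcd
  have := hab.ne; have := hac.ne; have := had.ne; have := hbc.ne; have := hbd.ne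
  have := hab.symm; have := hac.symm; have := had.symm; have := hbc.symm; have := hbd.symm
  by_cases hcd' : G.Adj c d
  · have := hcd'.symm
    refine not_free_of_injective_of_adj_iff ![a, b, c, d] ?_ ?_ hK4
    · intro i j hij
      fin_cases i <;> fin_cases j <;> simp_all
    · intro i j
      fin_cases i <;> fin_cases j <;> simp_all [K4]
  · have : ¬ G.Adj d c := fun h => hcd' h.symm
    refine not_free_of_injective_of_adj_iff ![a, b, c, d] ?_ ?_ hD
    · intro i j hij
      fin_cases i <;> fin_cases j <;> simp_all
    · intro i j
      fin_cases i <;> fin_cases j <;> simp_all [diamond, graphOfList]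

theorem adj_of_free_bull (hB : _root_.Free G bull) {a b c d e : V} (hab : G.Adj a b)
    (hac : G.Adj a c) (hbc : G.Adj b c) (had : G.Adj a d) (hbe : G.Adj b e)
    (hcd : ¬ G.Adj c d) (hce : ¬ G.Adj c e) (hae : ¬ G.Adj a e) (hbd : ¬ G.Adj b d) :
    G.Adj d e := by
  by_contra hde
  have := hab.ne; have := hac.ne; have := had.ne; have := hbc.ne; have := hbe.ne
  have := hab.symm; have := hac.symm; have := had.symm; have := hbc.symm; have := hbe.symm
  have : d ≠ e := by rintro rfl; exact hae had
  have : a ≠ e := by rintro rfl; exact hce hac.symm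
  have : b ≠ d := by rintro rfl; exact hcd hbc.symm
  have : c ≠ d := by rintro rfl; exact hbd hbc
  have : c ≠ e := by rintro rfl; exact hae hac
  have : ¬ G.Adj d c := fun h => hcd h.symm
  have : ¬ G.Adj e c := fun h => hce h.symm
  have : ¬ G.Adj e d := fun h => hde h.symm
  have : ¬ G.Adj e a := fun h => hae h.symm
  have : ¬ G.Adj d b := fun h => hbd h.symm
  refine not_free_of_injective_of_adj_iff ![a, b, c, d, e] ?_ ?_ hB
  · intro i j hij
    fin_cases i <;> fin_cases j <;> simp_all
  · intro i j
    fin_cases i <;> fin_cases j <;> simp_all [bull, graphOfList]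

theorem Reachable.mem_of_forall_adj_mem {S : Set V} (hS : ∀ u ∈ S, ∀ v, G.Adj u v → v ∈ S)
    {u v : V} (huv : G.Reachable u v) (hu : u ∈ S) : v ∈ S :=
  huv.mem_subgraphVerts (H := (⊤ : G.Subgraph).induce S)
    (fun a ha b hab => ⟨ha, hS a ha b hab, hab⟩) hu

theorem exists_adj_ne_ne_of_degree_ne_two {a b c : V} [Fintype (G.neighborSet a)]
    (hab : G.Adj a b) (hac : G.Adj a c) (hbc : b ≠ c) (hdeg : G.degree a ≠ 2) :
    ∃ v, G.Adj a v ∧ v ≠ b ∧ v ≠ c := by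
  classical
  have hsub : ({b, c} : Finset V) ⊆ G.neighborFinset a := by
    simp [Finset.insert_subset_iff, hab, hac]
  have hlt : ({b, c} : Finset V).card < (G.neighborFinset a).card := by
    have := Finset.card_le_card hsub
    rw [Finset.card_pair hbc, card_neighborFinset_eq_degree] at this ⊢
    omega
  obtain ⟨v, hv, hvbc⟩ := Finset.exists_mem_notMem_of_card_lt_card hlt
  simp only [mem_neighborFinset, Finset.mem_insert, Finset.mem_singleton, not_or] at hv hvbc
  exact ⟨v, hv, hvbc⟩

variable (G) in
def IsPrivateNeighbor {ι : Type*} (x : ι → V) (i : ι) (v : V) : Prop :=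
  ∀ j, G.Adj (x j) v ↔ j = i

section Triangle

variable {x : Fin 3 → V}

theorem isPrivateNeighbor_of_adj (hD : _root_.Free G diamond) (hK4 : _root_.Free G K4)
    (hx : Pairwise fun i j => G.Adj (x i) (x j)) {i : Fin 3} {v : V} (hv : G.Adj (x i) v)
    (hvx : v ∉ Set.range x) : G.IsPrivateNeighbor x i v := by
  refine fun j => ⟨fun hjv => ?_, fun h => h ▸ hv⟩
  by_contra hji
  obtain ⟨k, hki, hkj⟩ := Fin.exists_ne_ne_three i j
  exact hvx ⟨k, subsingleton_commonNeighbors hD hK4 (hx (Ne.symm hji))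
    ⟨hx hki.symm, hx hkj.symm⟩ ⟨hv, hjv⟩⟩

theorem exists_isPrivateNeighbor (hD : _root_.Free G diamond) (hK4 : _root_.Free G K4)
    (hx : Pairwise fun i j => G.Adj (x i) (x j)) (i : Fin 3) [Fintype (G.neighborSet (x i))]
    (hdeg : G.degree (x i) ≠ 2) : ∃ v, G.IsPrivateNeighbor x i v := by
  obtain ⟨j, hji, -⟩ := Fin.exists_ne_ne_three i i
  obtain ⟨k, hki, hkj⟩ := Fin.exists_ne_ne_three i j
  obtain ⟨v, hv, hvj, hvk⟩ := exists_adj_ne_ne_of_degree_ne_two (hx hji.symm) (hx hki.symm)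
    (hx hkj.symm).ne hdeg
  refine ⟨v, isPrivateNeighbor_of_adj hD hK4 hx hv ?_⟩
  rintro ⟨l, rfl⟩
  have hli : l ≠ i := by rintro rfl; exact G.irrefl hv
  have hlj : l ≠ j := by rintro rfl; exact hvj rfl
  have hlk : l ≠ k := by rintro rfl; exact hvk rfl
  omega

theorem IsPrivateNeighbor.adj (hB : _root_.Free G bull)
    (hx : Pairwise fun i j => G.Adj (x i) (x j)) {i j : Fin 3} (hij : i ≠ j) {p q : V} (hp : G.IsPrivateNeighbor x i p)
    (hq : G.IsPrivateNeighbor x j q) : G.Adj p q := by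
  obtain ⟨k, hki, hkj⟩ := Fin.exists_ne_ne_three i j
  exact adj_of_free_bull hB (hx hij) (hx hki.symm) (hx hkj.symm) ((hp i).2 rfl) ((hq j).2 rfl)
    (mt (hp k).1 hki) (mt (hq k).1 hkj) (mt (hq i).1 hij) (mt (hp j).1 hij.symm)

variable {y : Fin 3 → V}

theorem IsPrivateNeighbor.eq (hB : _root_.Free G bull) (hD : _root_.Free G diamond)
    (hK4 : _root_.Free G K4) (hx : Pairwise fun i j => G.Adj (x i) (x j))
    (hy : ∀ i, G.IsPrivateNeighbor x i (y i)) {i : Fin 3} {v : V}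
    (hv : G.IsPrivateNeighbor x i v) : v = y i := by
  obtain ⟨j, hji, -⟩ := Fin.exists_ne_ne_three i i
  obtain ⟨k, hki, hkj⟩ := Fin.exists_ne_ne_three i j
  exact subsingleton_commonNeighbors hD hK4 ((hy j).adj hB hx hkj.symm (hy k))
    ⟨(hy j).adj hB hx hji hv, (hy k).adj hB hx hki hv⟩
    ⟨(hy j).adj hB hx hji (hy i), (hy k).adj hB hx hki (hy i)⟩

theorem mem_range_of_adj_of_isPrivateNeighbor (hB : _root_.Free G bull)
    (hD : _root_.Free G diamond) (hK4 : _root_.Free G K4)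
    (hx : Pairwise fun i j => G.Adj (x i) (x j)) (hy : ∀ i, G.IsPrivateNeighbor x i (y i))
    {i : Fin 3} {v : V} (hv : G.Adj (y i) v) (hxv : ∀ j, ¬ G.Adj (x j) v) :
    v ∈ Set.range y := by
  by_contra hvy
  obtain ⟨j, hji, -⟩ := Fin.exists_ne_ne_three i i
  obtain ⟨k, hki, hkj⟩ := Fin.exists_ne_ne_three i j
  have hyij := (hy i).adj hB hx hji.symm (hy j)
  have hyik := (hy i).adj hB hx hki.symm (hy k)
  have hyjk := (hy j).adj hB hx hkj.symm (hy k)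
  have hjv : ¬ G.Adj (y j) v := fun h =>
    hvy ⟨k, subsingleton_commonNeighbors hD hK4 hyij ⟨hyik, hyjk⟩ ⟨hv, h⟩⟩
  have hkv : ¬ G.Adj (y k) v := fun h =>
    hvy ⟨j, subsingleton_commonNeighbors hD hK4 hyik ⟨hyij, hyjk.symm⟩ ⟨hv, h⟩⟩
  refine hxv j (adj_of_free_bull hB hyij hyik hyjk hv ((hy j j).2 rfl).symm hkv ?_ ?_ hjv).symm
  · exact fun h => hkj.symm ((hy k j).1 h.symm)
  · exact fun h => hji ((hy i j).1 h.symm)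

theorem mem_prism_of_adj (hB : _root_.Free G bull) (hD : _root_.Free G diamond)
    (hK4 : _root_.Free G K4) (hx : Pairwise fun i j => G.Adj (x i) (x j))
    (hy : ∀ i, G.IsPrivateNeighbor x i (y i)) {u v : V} (hu : u ∈ Set.range x ∪ Set.range y)
    (huv : G.Adj u v) : v ∈ Set.range x ∪ Set.range y := by
  by_cases hvx : v ∈ Set.range x
  · exact Or.inl hvx
  right
  by_cases hxv : ∃ j, G.Adj (x j) v
  · obtain ⟨j, hj⟩ := hxv
    exact ⟨j, ((isPrivateNeighbor_of_adj hD hK4 hx hj hvx).eq hB hD hK4 hx hy).symm⟩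
  simp only [not_exists] at hxv
  obtain ⟨i, rfl⟩ | ⟨i, rfl⟩ := hu
  · exact absurd huv (hxv i)
  · exact mem_range_of_adj_of_isPrivateNeighbor hB hD hK4 hx hy huv hxv

theorem isDomSet_of_forall_mem_prism [DecidableEq V] (hB : _root_.Free G bull)
    (hx : Pairwise fun i j => G.Adj (x i) (x j)) (hy : ∀ i, G.IsPrivateNeighbor x i (y i))
    (hall : ∀ v, v ∈ Set.range x ∪ Set.range y) : IsDomSet G {x 0, y 1} := by
  intro v hv
  obtain ⟨i, rfl⟩ | ⟨i, rfl⟩ := hall v <;> fin_cases i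
  · simp at hv
  · exact ⟨x 0, by simp, hx (by decide)⟩
  · exact ⟨x 0, by simp, hx (by decide)⟩
  · exact ⟨x 0, by simp, (hy 0 0).2 rfl⟩
  · simp at hv
  · exact ⟨y 1, by simp, (hy 1).adj hB hx (by decide) (hy 2)⟩

end Triangle

end SimpleGraph

theorem claim3_general {V : Type*} [Fintype V] (G : SimpleGraph V) [DecidableRel G.Adj]
    (hconn : G.Connected)
    (hB : _root_.Free G bull) (hDia : _root_.Free G diamond) (hK4 : _root_.Free G K4)
    (hdom : 3 ≤ domNum G) :
    ∀ x₁ x₂ x₃ : V, G.Adj x₁ x₂ → G.Adj x₂ x₃ → G.Adj x₁ x₃ →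
      ∃ x ∈ ({x₁, x₂, x₃} : Set V), G.degree x = 2 := by
  classical
  intro x₁ x₂ x₃ h₁₂ h₂₃ h₁₃
  by_contra! hdeg
  set x : Fin 3 → V := ![x₁, x₂, x₃]
  have hx : Pairwise fun i j => G.Adj (x i) (x j) := by
    intro i j hij
    fin_cases i <;> fin_cases j <;> simp_all [x, G.adj_comm]
  choose y hy using fun i =>
    exists_isPrivateNeighbor hDia hK4 hx i (hdeg (x i) (by fin_cases i <;> simp [x]))
  have hall (v : V) : v ∈ Set.range x ∪ Set.range y :=
    (hconn.preconnected (x 0) v).mem_of_forall_adj_mem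
      (fun _ hu _ huv => mem_prism_of_adj hB hDia hK4 hx hy hu huv) (Or.inl ⟨0, rfl⟩)
  have := domNum_le_card (isDomSet_of_forall_mem_prism hB hx hy hall)
  have := Finset.card_le_two (a := x 0) (b := y 1)
  omega

/-- Claim 3: in a connected `{B,D,K₄,K₂₃,P₂□P₃,P₇,C₇,F₁,…,F₅}`-free graph
with `γ(G) ≥ 3`, every triangle contains a vertex of degree exactly `2`. -/
theorem claim3 {V : Type*} [Fintype V] (G : SimpleGraph V) [DecidableRel G.Adj]
    (hconn : G.Connected)
    (hB : _root_.Free G bull) (hDia : _root_.Free G diamond) (hK4 : _root_.Free G K4) (hK23 : _root_.Free G K23)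
    (hP2P3 : _root_.Free G P2P3) (hP7 : _root_.Free G P7) (hC7 : _root_.Free G C7) (hF1 : _root_.Free G F1)
    (hF2 : _root_.Free G F2) (hF3 : _root_.Free G F3) (hF4 : _root_.Free G F4) (hF5 : _root_.Free G F5)
    (hdom : 3 ≤ domNum G) :
    ∀ x₁ x₂ x₃ : V, G.Adj x₁ x₂ → G.Adj x₂ x₃ → G.Adj x₁ x₃ →
      ∃ x ∈ ({x₁, x₂, x₃} : Set V), G.degree x = 2 :=
  claim3_general G hconn hB hDia hK4 hdom
end
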